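/- Let N ≥ 1, 1 ≤ d ≤ N−1, and let m, m′ be integers with |m|, |m′| ≤ N−d. With ρ_d(m,N) := Tr_{first N−d sites}( |g_m^N⟩⟨g_m^N| ) the reduced density matrix of |g_m^N⟩ on d consecutive sites, the trace distance satisfies ‖ρ_d(m,N) − ρ_d(m′,N)‖₁ = Σ_{r=−d}^{d} |g^d_r| · | |g^{N−d}_{m−r}| / |g^N_m| − |g^{N−d}_{m′−r}| / |g^N_{m′}| |. -/

import Mathlib

open scoped BigOperators ComplexOrder

noncomputable section

def traceNorm {n : Type*} [Fintype n] [DecidableEq n] (A : Matrix n n ℂ) : ℝ :=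
  (let hA := Matrix.posSemidef_conjTranspose_mul_self A;
    (hA.1.eigenvectorUnitary.1 *
      Matrix.diagonal (fun i => ((Real.sqrt (hA.1.eigenvalues i) : ℝ) : ℂ)) *
      (star hA.1.eigenvectorUnitary : Matrix n n ℂ))).trace.re

def dotc {n : Type*} [Fintype n] (v w : n → ℂ) : ℂ := ∑ x, star (v x) * w x

def outer {n : Type*} (v w : n → ℂ) : Matrix n n ℂ := fun x y => v x * star (w y)

def finShift {N : ℕ} (i : Fin N) : Fin N := ⟨(i.1 + 1) % N, Nat.mod_lt _ i.pos⟩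

/-- configurations of a chain of `N` spin-1's; the basis label `0,1,2` corresponds
to the spin value `-1,0,+1` -/
abbrev Conf3 (N : ℕ) := Fin N → Fin 3

/-- the total spin (coordinate sum) of a spin-1 configuration -/
def wsum {L : ℕ} (w : Conf3 L) : ℤ := ∑ j, (((w j : ℕ) : ℤ) - 1)

/-- the number of strings in `{-1,0,1}^L` with coordinate sum `m` -/
def gcard (L : ℕ) (m : ℤ) : ℕ :=
  (Finset.univ.filter (fun w : Conf3 L => wsum w = m)).card

/-- the state `|g_m^L⟩`: normalized uniform superposition of all strings of sum `m` -/
def gstate (L : ℕ) (m : ℤ) : Conf3 L → ℂ :=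
  fun w => if wsum w = m then ((Real.sqrt (gcard L m) : ℝ)⁻¹ : ℂ) else 0

/-- splitting a chain of `N` sites into the first `N - d` sites and the last `d` sites -/
def joinConf3 {N : ℕ} (d : ℕ) (a : Fin (N - d) → Fin 3) (b : Fin d → Fin 3) : Conf3 N :=
  fun i => if h : i.1 < N - d then a ⟨i.1, h⟩
    else b ⟨i.1 - (N - d), by have := i.isLt; omega⟩

/-- the reduced density matrix of `|g_m^N⟩` on the last `d` sites -/
def gRDM (N d : ℕ) (m : ℤ) : Matrix (Fin d → Fin 3) (Fin d → Fin 3) ℂ :=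
  fun a a' => ∑ b : Fin (N - d) → Fin 3,
    gstate N m (joinConf3 d b a) * star (gstate N m (joinConf3 d b a'))

/-- `F` acts (possibly) nontrivially only on the sites in `S` -/
def ActsOn3 {N : ℕ} (S : Finset (Fin N)) (F : Matrix (Conf3 N) (Conf3 N) ℂ) : Prop :=
  ∃ F' : Matrix ({i // i ∈ S} → Fin 3) ({i // i ∈ S} → Fin 3) ℂ,
    ∀ x y : Conf3 N,
      F x y = if (∀ i, i ∉ S → x i = y i)
        then F' (fun i => x i.1) (fun i => y i.1) else 0

def cyclInterval {N : ℕ} (j : Fin N) (len : ℕ) : Finset (Fin N) :=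
  (Finset.range len).image (fun t => ⟨(j.1 + t) % N, Nat.mod_lt _ j.pos⟩)

def combineConf3 {N : ℕ} (S : Finset (Fin N)) (a : {i // i ∈ S} → Fin 3)
    (b : {i // i ∉ S} → Fin 3) : Conf3 N :=
  fun i => if h : i ∈ S then a ⟨i, h⟩ else b ⟨i, h⟩

/-- partial trace over the complement of `S` -/
def ptrace3 {N : ℕ} (S : Finset (Fin N)) (M : Matrix (Conf3 N) (Conf3 N) ℂ) :
    Matrix ({i // i ∈ S} → Fin 3) ({i // i ∈ S} → Fin 3) ℂ :=
  fun a a' => ∑ b : {i // i ∉ S} → Fin 3, M (combineConf3 S a b) (combineConf3 S a' b)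

/-- the rank-one projector `|v⟩⟨v|` on the pair of sites `(j, j+1)` (periodic) -/
def twoSiteProj {N : ℕ} (j : Fin N) (v : Fin 3 → Fin 3 → ℂ) :
    Matrix (Conf3 N) (Conf3 N) ℂ :=
  fun x y => v (x j) (x (finShift j)) * star (v (y j) (y (finShift j))) *
    (if ∀ i, i ≠ j → i ≠ finShift j → x i = y i then 1 else 0)

/-- `|F⟩ = (|ud⟩ - |00⟩)/√2` (here `u = 2`, `0 = 1`, `d = 0`) -/
def vecF : Fin 3 → Fin 3 → ℂ :=
  fun p q => ((if p = 2 ∧ q = 0 then 1 else 0) - (if p = 1 ∧ q = 1 then 1 else 0))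
    / (Real.sqrt 2 : ℂ)

/-- `|U⟩ = (|0u⟩ - |u0⟩)/√2` -/
def vecU : Fin 3 → Fin 3 → ℂ :=
  fun p q => ((if p = 1 ∧ q = 2 then 1 else 0) - (if p = 2 ∧ q = 1 then 1 else 0))
    / (Real.sqrt 2 : ℂ)

/-- `|D⟩ = (|0d⟩ - |d0⟩)/√2` -/
def vecD : Fin 3 → Fin 3 → ℂ :=
  fun p q => ((if p = 1 ∧ q = 0 then 1 else 0) - (if p = 0 ∧ q = 1 then 1 else 0))
    / (Real.sqrt 2 : ℂ)

/-- the spin-1 Motzkin Hamiltonian with periodic boundary conditions -/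
def motzkinH (N : ℕ) : Matrix (Conf3 N) (Conf3 N) ℂ :=
  ∑ j : Fin N, (twoSiteProj j vecF + twoSiteProj j vecU + twoSiteProj j vecD)

/-- one application of a local move `(u,d) ↔ (0,0)`, `(0,u) ↔ (u,0)`, `(0,d) ↔ (d,0)`
on a cyclically adjacent pair of sites -/
def MotzkinStep {N : ℕ} (x y : Conf3 N) : Prop :=
  ∃ j : Fin N,
    (∀ i, i ≠ j → i ≠ finShift j → x i = y i) ∧
    (((x j, x (finShift j)) = ((2 : Fin 3), (0 : Fin 3)) ∧ (y j, y (finShift j)) = (1, 1)) ∨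
     ((x j, x (finShift j)) = (1, 1) ∧ (y j, y (finShift j)) = (2, 0)) ∨
     ((x j, x (finShift j)) = (1, 2) ∧ (y j, y (finShift j)) = (2, 1)) ∨
     ((x j, x (finShift j)) = (2, 1) ∧ (y j, y (finShift j)) = (1, 2)) ∨
     ((x j, x (finShift j)) = (1, 0) ∧ (y j, y (finShift j)) = (0, 1)) ∨
     ((x j, x (finShift j)) = (0, 1) ∧ (y j, y (finShift j)) = (1, 0)))


/-! Only the total spin `r` of the last `d` sites matters: the reduced density matrix has entry
`|g^{N-d}_{m-r}| / |g^N_m|` at `(a, a')` when `a` and `a'` both have spin `r`, and `0` otherwise.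
So it, and the difference `M` of two such matrices, is block diagonal with blocks `λ_r J_r`,
`J_r` the all-ones matrix on the spin-`r` sector. As `J_r² = |g^d_r| J_r`, the positive
semidefinite matrix `⊕ |λ_r| J_r` squares to `MᴴM`, hence is `√(MᴴM)`, and the trace norm is its
trace `Σ_r |g^d_r| |λ_r|`. -/

namespace Matrix

variable {n κ : Type*} [DecidableEq κ]

def constOnFibers (f : n → κ) (c : κ → ℂ) : Matrix n n ℂ :=
  fun a a' => if f a = f a' then c (f a) else 0

lemma constOnFibers_sub (f : n → κ) (c c' : κ → ℂ) :
    constOnFibers f c - constOnFibers f c' = constOnFibers f (c - c') := by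
  ext a a'
  simp only [constOnFibers, sub_apply, Pi.sub_apply]
  split_ifs <;> simp

lemma constOnFibers_conjTranspose (f : n → κ) (c : κ → ℂ) :
    (constOnFibers f c)ᴴ = constOnFibers f (star c) := by
  ext a a'
  simp only [constOnFibers, conjTranspose_apply, Pi.star_apply]
  by_cases h : f a = f a'
  · rw [if_pos h.symm, if_pos h, h]
  · rw [if_neg (Ne.symm h), if_neg h, star_zero]

lemma constOnFibers_mul [Fintype n] (f : n → κ) (c c' : κ → ℂ) :
    constOnFibers f c * constOnFibers f c' =
      constOnFibers f (fun k => (Finset.univ.filter fun b => f b = k).card * c k * c' k) := by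
  ext a a'
  simp only [constOnFibers, mul_apply]
  by_cases h : f a = f a'
  · rw [if_pos h, ← h, Finset.card_filter, Nat.cast_sum, Finset.sum_mul, Finset.sum_mul]
    refine Finset.sum_congr rfl fun b _ => ?_
    by_cases hb : f b = f a
    · simp [hb]
    · simp [hb, Ne.symm hb]
  · rw [if_neg h]
    refine Finset.sum_eq_zero fun b _ => ?_
    by_cases hb : f a = f b
    · rw [if_neg fun hb' => h (hb.trans hb'), mul_zero]
    · rw [if_neg hb, zero_mul]

lemma constOnFibers_congr {f : n → κ} {c c' : κ → ℂ} (h : ∀ a, c (f a) = c' (f a)) :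
    constOnFibers f c = constOnFibers f c' := by
  ext a a'
  simp only [constOnFibers, h]

lemma trace_constOnFibers [Fintype n] (f : n → κ) (c : κ → ℂ) :
    (constOnFibers f c).trace = ∑ a, c (f a) := by
  simp [trace, constOnFibers]

lemma posSemidef_constOnFibers [Fintype n] (f : n → κ) (c : κ → ℝ) (hc : ∀ k, 0 ≤ c k) :
    (constOnFibers f fun k => (c k : ℂ)).PosSemidef := by
  set card : κ → ℝ := fun k => (Finset.univ.filter fun b => f b = k).card
  have hcard : ∀ a, 0 < card (f a) := fun a =>
    Nat.cast_pos.mpr (Finset.card_pos.mpr ⟨a, by simp⟩)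
  -- the square root of each block `c k J` is `√(c k / card k) J`, since `J² = (card k) J`
  set B := constOnFibers f fun k => ((Real.sqrt (c k / card k) : ℝ) : ℂ)
  have hB : constOnFibers f (fun k => (c k : ℂ)) = Bᴴ * B := by
    rw [constOnFibers_conjTranspose, constOnFibers_mul]
    refine constOnFibers_congr fun a => ?_
    simp only [Pi.star_apply, Complex.star_def, Complex.conj_ofReal]
    rw [mul_assoc, ← Complex.ofReal_mul, Real.mul_self_sqrt (div_nonneg (hc _) (hcard a).le)]
    push_cast
    field_simp [(hcard a).ne']
    simp [card]
  exact hB ▸ posSemidef_conjTranspose_mul_self B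

end Matrix

open Matrix

open scoped MatrixOrder in
/-- `traceNorm A` is the trace of `√(AᴴA)` written through an eigendecomposition; by uniqueness of
positive square roots any positive semidefinite `S` with `S² = AᴴA` computes it. -/
lemma traceNorm_eq_re_trace_of_sq_eq {n : Type*} [Fintype n] [DecidableEq n]
    {S A : Matrix n n ℂ} (hS : S.PosSemidef) (h : S ^ 2 = Aᴴ * A) :
    traceNorm A = S.trace.re := by
  have hA := posSemidef_conjTranspose_mul_self A
  have hsqrt := hA.1.cfc_eq Real.sqrt
  rw [← cfcₙ_eq_cfc (hf0 := Real.sqrt_zero), ← CFC.sqrt_eq_real_sqrt _ hA.nonneg,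
    CFC.sqrt_unique (b := S) (by rw [← h, pow_two]) hS.nonneg, IsHermitian.cfc,
    Unitary.conjStarAlgAut_apply] at hsqrt
  rw [traceNorm, hsqrt]
  rfl

lemma traceNorm_constOnFibers {n κ : Type*} [Fintype n] [DecidableEq n] [DecidableEq κ]
    (f : n → κ) (c : κ → ℝ) :
    traceNorm (constOnFibers f fun k => (c k : ℂ)) = ∑ a, |c (f a)| := by
  have hsq : (constOnFibers f fun k => ((|c k| : ℝ) : ℂ)) ^ 2 =
      (constOnFibers f fun k => (c k : ℂ))ᴴ * constOnFibers f fun k => (c k : ℂ) := by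
    rw [pow_two, constOnFibers_conjTranspose, constOnFibers_mul, constOnFibers_mul]
    refine constOnFibers_congr fun a => ?_
    simp only [Pi.star_apply, Complex.star_def, Complex.conj_ofReal, mul_assoc,
      ← Complex.ofReal_mul, abs_mul_abs_self]
  rw [traceNorm_eq_re_trace_of_sq_eq (posSemidef_constOnFibers f (fun k => |c k|)
    (fun k => abs_nonneg _)) hsq, trace_constOnFibers, ← Complex.ofReal_sum, Complex.ofReal_re]

lemma abs_wsum_le {L : ℕ} (w : Conf3 L) : |wsum w| ≤ L := by
  calc |wsum w| ≤ ∑ j, |((w j : ℕ) : ℤ) - 1| := Finset.abs_sum_le_sum_abs _ _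
    _ ≤ ∑ _j : Fin L, 1 := Finset.sum_le_sum fun j _ => by
        have := (w j).isLt
        rw [abs_sub_le_iff]
        omega
    _ = L := by simp

lemma sum_comp_wsum {L : ℕ} (g : ℤ → ℝ) :
    ∑ w : Conf3 L, g (wsum w) = ∑ r ∈ Finset.Icc (-(L : ℤ)) L, (gcard L r : ℝ) * g r := by
  rw [← Finset.sum_fiberwise_of_maps_to (g := wsum)
    fun w _ => Finset.mem_Icc.mpr (abs_le.mp (abs_wsum_le w))]
  refine Finset.sum_congr rfl fun r _ => ?_
  rw [Finset.sum_congr rfl fun w hw => by rw [(Finset.mem_filter.mp hw).2], Finset.sum_const,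
    nsmul_eq_mul]
  rfl

lemma wsum_joinConf3 {N d : ℕ} (hd : d ≤ N) (b : Conf3 (N - d)) (a : Conf3 d) :
    wsum (joinConf3 d b a) = wsum b + wsum a := by
  let e : Fin (N - d) ⊕ Fin d ≃ Fin N := finSumFinEquiv.trans (finCongr (by omega))
  rw [wsum, ← Fintype.sum_equiv e (fun x => ((joinConf3 d b a (e x) : ℕ) : ℤ) - 1) _ fun _ => rfl,
    Fintype.sum_sum_type]
  congr 1
  · refine Finset.sum_congr rfl fun i _ => ?_
    rw [joinConf3, dif_pos (show (e (.inl i)).1 < N - d from i.isLt)]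
    rfl
  · refine Finset.sum_congr rfl fun i _ => ?_
    have he : (e (.inr i)).1 = N - d + i.1 := rfl
    rw [joinConf3, dif_neg (by omega)]
    simp only [he, Nat.add_sub_cancel_left, Fin.eta]

lemma gRDM_eq_constOnFibers {N d : ℕ} (hd : d ≤ N) (m : ℤ) :
    gRDM N d m = constOnFibers wsum fun r =>
      (((gcard (N - d) (m - r) : ℝ) / (gcard N m : ℝ) : ℝ) : ℂ) := by
  ext a a'
  simp only [gRDM, constOnFibers, gstate, wsum_joinConf3 hd, apply_ite star, star_zero,
    Complex.star_def, map_inv₀, Complex.conj_ofReal, ite_zero_mul_ite_zero, ← eq_sub_iff_add_eq]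
  by_cases h : wsum a = wsum a'
  · rw [if_pos h, ← h]
    simp only [and_self]
    rw [← Finset.sum_filter, Finset.sum_const, nsmul_eq_mul, ← mul_inv, ← Complex.ofReal_mul, Real.mul_self_sqrt (Nat.cast_nonneg _),
      Complex.ofReal_div, div_eq_mul_inv]
    rfl
  · rw [if_neg h]
    exact Finset.sum_eq_zero fun b _ => if_neg fun hb => h (by omega)

theorem motzkin_trace_distance_formula_general
    (N d : ℕ) (hdN : d ≤ N - 1) (m m' : ℤ) :
    traceNorm (gRDM N d m - gRDM N d m')
      = ∑ r ∈ Finset.Icc (-(d : ℤ)) (d : ℤ),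
          (gcard d r : ℝ) *
            |(gcard (N - d) (m - r) : ℝ) / (gcard N m : ℝ)
              - (gcard (N - d) (m' - r) : ℝ) / (gcard N m' : ℝ)| := by
  have hd : d ≤ N := by omega
  rw [gRDM_eq_constOnFibers hd, gRDM_eq_constOnFibers hd, constOnFibers_sub]
  simp only [Pi.sub_def, ← Complex.ofReal_sub]
  rw [traceNorm_constOnFibers]
  exact sum_comp_wsum fun r =>
    |(gcard (N - d) (m - r) : ℝ) / gcard N m - (gcard (N - d) (m' - r) : ℝ) / gcard N m'|

/-- exact formula for the trace distance between reduced density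
matrices of the states `|g_m^N⟩` on `d` consecutive sites. -/
theorem motzkin_trace_distance_formula
    (N d : ℕ) (hN : 1 ≤ N) (hd : 1 ≤ d) (hdN : d ≤ N - 1) (m m' : ℤ)
    (hm : |m| ≤ (N : ℤ) - d) (hm' : |m'| ≤ (N : ℤ) - d) :
    traceNorm (gRDM N d m - gRDM N d m')
      = ∑ r ∈ Finset.Icc (-(d : ℤ)) (d : ℤ),
          (gcard d r : ℝ) *
            |(gcard (N - d) (m - r) : ℝ) / (gcard N m : ℝ)
              - (gcard (N - d) (m' - r) : ℝ) / (gcard N m' : ℝ)| :=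
  motzkin_trace_distance_formula_general N d hdN m m'

end
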